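/- arXiv:1407.0753 — 6 statements merged into one kernel-verified Lean document; each statement's English description precedes it below -/
import Mathlib

section
/- Let φ : ℝⁿ → ℝ be twice continuously differentiable and suppose there is a symmetric positive semidefinite linear map Q such that (∇²φ(x))² ⪯ Q for all x. Then for all x₁, x₂ ∈ ℝⁿ, ‖∇φ(x₁) − ∇φ(x₂)‖² ≤ ⟨x₁ − x₂, Q(x₁ − x₂)⟩. -/
/-!
Along the segment from `x₂` to `x₁` the gradient moves with velocity `H z d`, `d = x₁ - x₂`,
and since `H z` is symmetric, `‖H z d‖² = ⟪d, (H z)² d⟫ ≤ ⟪d, Q d⟫`. The mean value inequality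
then bounds `‖∇φ x₁ - ∇φ x₂‖` by `√⟪d, Q d⟫`.
-/

open scoped RealInnerProductSpace

theorem norm_sub_le_of_norm_fderiv_apply_le {E F : Type*} [NormedAddCommGroup E] [NormedSpace ℝ E]
    [NormedAddCommGroup F] [NormedSpace ℝ F] {f : E → F} {f' : E → E →L[ℝ] F}
    (hf : ∀ z, HasFDerivAt f (f' z) z) {x y : E} {C : ℝ} (hC : ∀ z, ‖f' z (x - y)‖ ≤ C) :
    ‖f x - f y‖ ≤ C := by
  have hline : ∀ t : ℝ, HasDerivAt (fun t : ℝ => y + t • (x - y)) (x - y) t := fun t => by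
    simpa using ((hasDerivAt_id t).smul_const (x - y)).const_add y
  have hmvt := norm_image_sub_le_of_norm_deriv_le_segment_01'
    (fun t _ => ((hf _).comp_hasDerivAt t (hline t)).hasDerivWithinAt) (fun t _ => hC _)
  simpa using hmvt

theorem sq_norm_sub_le_of_sq_norm_fderiv_apply_le {E F : Type*} [NormedAddCommGroup E]
    [NormedSpace ℝ E] [NormedAddCommGroup F] [NormedSpace ℝ F] {f : E → F} {f' : E → E →L[ℝ] F}
    (hf : ∀ z, HasFDerivAt f (f' z) z) {x y : E} {c : ℝ} (hc : ∀ z, ‖f' z (x - y)‖ ^ 2 ≤ c) :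
    ‖f x - f y‖ ^ 2 ≤ c := by
  have hc₀ : 0 ≤ c := (sq_nonneg _).trans (hc x)
  have hle : ‖f x - f y‖ ≤ √c :=
    norm_sub_le_of_norm_fderiv_apply_le hf fun z => Real.le_sqrt_of_sq_le (hc z)
  calc ‖f x - f y‖ ^ 2 ≤ √c ^ 2 := pow_le_pow_left₀ (norm_nonneg _) hle 2
    _ = c := Real.sq_sqrt hc₀

theorem real_inner_apply_apply_eq_norm_sq {E : Type*} [NormedAddCommGroup E]
    [InnerProductSpace ℝ E] {A : E →L[ℝ] E} (hA : ∀ v w, ⟪A v, w⟫ = ⟪v, A w⟫) (v : E) :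
    ⟪v, A (A v)⟫ = ‖A v‖ ^ 2 := by
  rw [← hA, real_inner_self_eq_norm_sq]

theorem gradient_diff_sq_le_of_hessian_sq_le_general {n : ℕ}
    (gradφ : EuclideanSpace ℝ (Fin n) → EuclideanSpace ℝ (Fin n))
    (H : EuclideanSpace ℝ (Fin n) → (EuclideanSpace ℝ (Fin n) →L[ℝ] EuclideanSpace ℝ (Fin n)))
    (Q : EuclideanSpace ℝ (Fin n) →L[ℝ] EuclideanSpace ℝ (Fin n))
    (hHess : ∀ x, HasFDerivAt gradφ (H x) x)
    (hHsym : ∀ x v w, ⟪(H x) v, w⟫ = ⟪v, (H x) w⟫)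
    (hsq : ∀ x v, ⟪v, (H x) ((H x) v)⟫ ≤ ⟪v, Q v⟫) :
    ∀ x₁ x₂, ‖gradφ x₁ - gradφ x₂‖ ^ 2 ≤ ⟪x₁ - x₂, Q (x₁ - x₂)⟫ := by
  intro x₁ x₂
  refine sq_norm_sub_le_of_sq_norm_fderiv_apply_le hHess fun z => ?_
  rw [← real_inner_apply_apply_eq_norm_sq (hHsym z)]
  exact hsq z (x₁ - x₂)

/-- If `φ : ℝⁿ → ℝ` is twice continuously differentiable (with gradient `gradφ` and
Hessian `H`) and `Q` is a symmetric positive semidefinite linear map with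
`(∇²φ(x))² ⪯ Q` for all `x`, then `‖∇φ(x₁) − ∇φ(x₂)‖² ≤ ⟨x₁ − x₂, Q(x₁ − x₂)⟩`. -/
theorem gradient_diff_sq_le_of_hessian_sq_le {n : ℕ}
    (φ : EuclideanSpace ℝ (Fin n) → ℝ)
    (gradφ : EuclideanSpace ℝ (Fin n) → EuclideanSpace ℝ (Fin n))
    (H : EuclideanSpace ℝ (Fin n) → (EuclideanSpace ℝ (Fin n) →L[ℝ] EuclideanSpace ℝ (Fin n)))
    (Q : EuclideanSpace ℝ (Fin n) →L[ℝ] EuclideanSpace ℝ (Fin n))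
    (hgrad : ∀ x, HasGradientAt φ (gradφ x) x)
    (hHess : ∀ x, HasFDerivAt gradφ (H x) x)
    (hHcont : Continuous H)
    (hHsym : ∀ x v w, ⟪(H x) v, w⟫ = ⟪v, (H x) w⟫)
    (hQsym : ∀ v w, ⟪Q v, w⟫ = ⟪v, Q w⟫)
    (hQpsd : ∀ v, 0 ≤ ⟪v, Q v⟫)
    (hsq : ∀ x v, ⟪v, (H x) ((H x) v)⟫ ≤ ⟪v, Q v⟫) :
    ∀ x₁ x₂, ‖gradφ x₁ - gradφ x₂‖ ^ 2 ≤ ⟪x₁ - x₂, Q (x₁ - x₂)⟫ :=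
  gradient_diff_sq_le_of_hessian_sq_le_general gradφ H Q hHess hHsym hsq
end

section
/- Let h : ℝⁿ → ℝ be twice continuously differentiable with bounded Hessian. Then the condition inf_x { h(x) − c‖∇h(x)‖² } > −∞ holds for some c > 0 if and only if h is bounded below. -/
open scoped RealInnerProductSpace

/-- Let `h : ℝⁿ → ℝ` be twice continuously differentiable with bounded Hessian.
Then `inf_x { h(x) − c‖∇h(x)‖² } > −∞` for some `c > 0` if and only if
`h` is bounded below. -/
theorem inf_sub_grad_sq_finite_iff_bddBelow {n : ℕ}
    (h : EuclideanSpace ℝ (Fin n) → ℝ)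
    (gradh : EuclideanSpace ℝ (Fin n) → EuclideanSpace ℝ (Fin n))
    (H : EuclideanSpace ℝ (Fin n) → (EuclideanSpace ℝ (Fin n) →L[ℝ] EuclideanSpace ℝ (Fin n)))
    (hgrad : ∀ x, HasGradientAt h (gradh x) x)
    (hHess : ∀ x, HasFDerivAt gradh (H x) x)
    (hHcont : Continuous H)
    (hHbd : ∃ Cb : ℝ, ∀ x, ‖H x‖ ≤ Cb) :
    (∃ c : ℝ, 0 < c ∧ BddBelow (Set.range fun x => h x - c * ‖gradh x‖ ^ 2)) ↔
      BddBelow (Set.range h) := by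
  obtain ⟨Cb, hCb⟩ := hHbd
  constructor
  · rintro ⟨c, hc, m, hm⟩
    refine ⟨m, ?_⟩
    rintro _ ⟨x, rfl⟩
    have := hm (Set.mem_range_self (f := fun x => h x - c * ‖gradh x‖ ^ 2) x)
    nlinarith [sq_nonneg ‖gradh x‖, this]
  · rintro ⟨m, hm⟩
    set L : ℝ := max Cb 1 with hL
    have hL1 : (1:ℝ) ≤ L := le_max_right _ _
    have hLpos : (0:ℝ) < L := lt_of_lt_of_le one_pos hL1
    -- gradh is L-Lipschitz
    have hlip : ∀ x y, ‖gradh y - gradh x‖ ≤ L * ‖y - x‖ := by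
      intro x y
      have := Convex.norm_image_sub_le_of_norm_hasFDerivWithin_le
        (f := gradh) (f' := H) (C := L) (s := Set.univ)
        (fun z _ => (hHess z).hasFDerivWithinAt)
        (fun z _ => le_trans (hCb z) (le_max_left _ _))
        convex_univ (Set.mem_univ x) (Set.mem_univ y)
      simpa using this
    -- quadratic upper bound
    have key : ∀ x y, h y - h x - ⟪gradh x, y - x⟫ ≤ L * ‖y - x‖ ^ 2 := by
      intro x y
      have hseg : ∀ z ∈ segment ℝ x y, ‖z - x‖ ≤ ‖y - x‖ := by
        rintro z ⟨a, b, ha, hb, hab, rfl⟩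
        have : a • x + b • y - x = b • (y - x) := by
          have : a = 1 - b := by linarith
          rw [this]; module
        rw [this, norm_smul]
        simp only [Real.norm_eq_abs, abs_of_nonneg hb]
        nlinarith [norm_nonneg (y - x)]
      have := Convex.norm_image_sub_le_of_norm_hasFDerivWithin_le'
        (f := h) (f' := fun z => (InnerProductSpace.toDual ℝ _) (gradh z))
        (φ := (InnerProductSpace.toDual ℝ _) (gradh x)) (C := L * ‖y - x‖)
        (s := segment ℝ x y)
        (fun z _ => ((hgrad z).hasFDerivAt).hasFDerivWithinAt)
        (fun z hz => by
          rw [← map_sub]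
          calc ‖(InnerProductSpace.toDual ℝ _) (gradh z - gradh x)‖
              = ‖gradh z - gradh x‖ := (InnerProductSpace.toDual ℝ _).norm_map _
            _ ≤ L * ‖z - x‖ := hlip x z
            _ ≤ L * ‖y - x‖ := by
                exact mul_le_mul_of_nonneg_left (hseg z hz) hLpos.le)
        (convex_segment x y) (left_mem_segment ℝ x y) (right_mem_segment ℝ x y)
      have htd : (InnerProductSpace.toDual ℝ _) (gradh x) (y - x) = ⟪gradh x, y - x⟫ := rfl
      rw [htd] at this
      calc h y - h x - ⟪gradh x, y - x⟫ ≤ ‖h y - h x - ⟪gradh x, y - x⟫‖ := le_abs_self _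
        _ ≤ L * ‖y - x‖ * ‖y - x‖ := this
        _ = L * ‖y - x‖ ^ 2 := by ring
    refine ⟨1 / (4 * L), by positivity, m, ?_⟩
    rintro _ ⟨x, rfl⟩
    set y := x - (1 / (2 * L)) • gradh x with hy
    have h1 : ⟪gradh x, y - x⟫ = -(1 / (2 * L)) * ‖gradh x‖ ^ 2 := by
      have : y - x = (-(1 / (2 * L))) • gradh x := by rw [hy]; module
      rw [this, real_inner_smul_right, real_inner_self_eq_norm_sq]
    have h2 : ‖y - x‖ ^ 2 = (1 / (2 * L)) ^ 2 * ‖gradh x‖ ^ 2 := by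
      have : y - x = (-(1 / (2 * L))) • gradh x := by rw [hy]; module
      rw [this, norm_smul]
      simp [mul_pow]
    have hk := key x y
    have hmy : m ≤ h y := hm (Set.mem_range_self y)
    rw [h1, h2] at hk
    have hL2 : L * (1 / (2 * L)) ^ 2 = 1 / (4 * L) := by
      field_simp; ring
    rw [← mul_assoc, hL2] at hk
    have hh : (1:ℝ)/(2*L) = 2*(1/(4*L)) := by field_simp; ring
    rw [hh] at hk
    nlinarith [hk, hmy]
end

section
/- Let h, q : ℝⁿ → ℝ be twice continuously differentiable with q convex, and suppose −ℓ I ⪯ ∇²h(x) + ∇²q(x) ⪯ ℓ I for all x and some ℓ > 0. Let P : ℝⁿ → (−∞, ∞] be proper and closed, let β ∈ (0, 1/ℓ), and suppose x⁺ minimizes y ↦ ⟨∇h(x), y − x⟩ + (1/(2β))‖y − x‖² + P(y). Then h(x⁺) + P(x⁺) ≤ h(x) + P(x) − (1/(2β) − ℓ/2)‖x⁺ − x‖². -/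
/-!
Restricted to the segment from `x` to `x⁺`, the Hessian bound says that
`t ↦ (h + q)(x + t (x⁺ - x))` has second derivative at most `ℓ ‖x⁺ - x‖²`, so `h + q` lies below its
linearization at `x` plus `ℓ/2 ‖x⁺ - x‖²`. Subtracting the tangent inequality of the convex `q`
leaves the same bound for `h` alone. Testing the minimality of `x⁺` against `y = x` gives
`⟪∇h(x), x⁺ - x⟫ + ‖x⁺ - x‖² / (2β) + P(x⁺) ≤ P(x)`, and adding the two inequalities gives the claim.
-/

open scoped RealInnerProductSpace

open Set AffineMap

theorem ConvexOn.add_mul_sub_le_of_hasDerivAt {S : Set ℝ} {g : ℝ → ℝ} {g' x y : ℝ}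
    (hg : ConvexOn ℝ S g) (hx : x ∈ S) (hy : y ∈ S) (hd : HasDerivAt g g' x) :
    g x + g' * (y - x) ≤ g y := by
  rcases lt_trichotomy x y with hxy | rfl | hyx
  · have := hg.le_slope_of_hasDerivAt hx hy hxy hd
    rw [slope_def_field, le_div_iff₀ (sub_pos.2 hxy)] at this
    linarith
  · simp
  · have := hg.slope_le_of_hasDerivAt hy hx hyx hd
    rw [slope_def_field, div_le_iff₀ (sub_pos.2 hyx)] at this
    linarith

theorem le_add_mul_sub_add_sq_of_deriv2_le {φ φ' φ'' : ℝ → ℝ} {C : ℝ}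
    (hφ : ∀ t, HasDerivAt φ (φ' t) t) (hφ' : ∀ t, HasDerivAt φ' (φ'' t) t)
    (hC : ∀ t, φ'' t ≤ C) (s t : ℝ) : φ t ≤ φ s + φ' s * (t - s) + C / 2 * (t - s) ^ 2 := by
  -- `C u² / 2 - φ u` has nonnegative second derivative, hence is convex
  have hg : ∀ u, HasDerivAt (fun u => C / 2 * u ^ 2 - φ u) (C * u - φ' u) u := fun u =>
    (((hasDerivAt_pow 2 u).const_mul (C / 2)).sub (hφ u)).congr_deriv (by push_cast; ring)
  have hg'_mono : Monotone fun u => C * u - φ' u :=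
    monotone_of_hasDerivAt_nonneg (fun u => ((hasDerivAt_id u).const_mul C).sub (hφ' u))
      fun u => by simpa using hC u
  have hconv : ConvexOn ℝ univ fun u => C / 2 * u ^ 2 - φ u :=
    Monotone.convexOn_univ_of_deriv (fun u => (hg u).differentiableAt)
      (by simpa only [funext fun u => (hg u).deriv] using hg'_mono)
  have := hconv.add_mul_sub_le_of_hasDerivAt (mem_univ s) (mem_univ t) (hg s)
  linear_combination this

theorem EReal.coe_add_le_coe_add_of_coe_add_le {a b c : ℝ} {p p' : EReal}
    (hp : (a : EReal) + p' ≤ p) (h : b ≤ c + a) : (b : EReal) + p' ≤ c + p := by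
  induction p' using EReal.rec with
  | bot => simp
  | top => simp_all
  | coe r =>
    induction p using EReal.rec with
    | bot => simp_all
    | top => simp
    | coe s => norm_cast at hp ⊢; linarith

section InnerProductSpace

variable {F : Type*} [NormedAddCommGroup F] [InnerProductSpace ℝ F] [CompleteSpace F]

theorem HasGradientAt.add {f g : F → ℝ} {f' g' x : F} (hf : HasGradientAt f f' x)
    (hg : HasGradientAt g g' x) : HasGradientAt (f + g) (f' + g') x := by
  rw [hasGradientAt_iff_hasFDerivAt, map_add]
  exact hf.hasFDerivAt.add hg.hasFDerivAt

theorem HasGradientAt.hasDerivAt_comp_lineMap {f : F → ℝ} {g x y : F} {t : ℝ}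
    (hf : HasGradientAt f g (lineMap x y t)) :
    HasDerivAt (fun s => f (lineMap x y s)) ⟪g, y - x⟫ t := by
  have := hf.hasFDerivAt.comp_hasDerivAt t hasDerivAt_lineMap
  simp only [InnerProductSpace.toDual_apply_apply] at this
  exact this

theorem ConvexOn.add_inner_le_of_hasGradientAt {q : F → ℝ} {g x : F}
    (hq : ConvexOn ℝ univ q) (hg : HasGradientAt q g x) (y : F) : q x + ⟪g, y - x⟫ ≤ q y := by
  have hline : ConvexOn ℝ univ fun s : ℝ => q (lineMap x y s) := by
    have := hq.comp_affineMap (lineMap (k := ℝ) x y)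
    rw [preimage_univ] at this
    exact this
  have hd : HasDerivAt (fun s : ℝ => q (lineMap x y s)) ⟪g, y - x⟫ 0 :=
    HasGradientAt.hasDerivAt_comp_lineMap (by rwa [lineMap_apply_zero])
  simpa using hline.add_mul_sub_le_of_hasDerivAt (mem_univ 0) (mem_univ 1) hd

theorem le_add_inner_add_of_inner_hessian_le {f : F → ℝ} {g : F → F} {H : F → F →L[ℝ] F}
    {ℓ : ℝ} (hf : ∀ z, HasGradientAt f (g z) z) (hg : ∀ z, HasFDerivAt g (H z) z)
    (hH : ∀ z v, ⟪v, H z v⟫ ≤ ℓ * ‖v‖ ^ 2) (x y : F) :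
    f y ≤ f x + ⟪g x, y - x⟫ + ℓ / 2 * ‖y - x‖ ^ 2 := by
  have hφ' : ∀ t, HasDerivAt (fun s => ⟪g (lineMap x y s), y - x⟫)
      ⟪H (lineMap x y t) (y - x), y - x⟫ t := fun t => by
    simpa using ((hg _).comp_hasDerivAt t hasDerivAt_lineMap).inner ℝ (hasDerivAt_const t _)
  have := le_add_mul_sub_add_sq_of_deriv2_le (fun t => (hf _).hasDerivAt_comp_lineMap) hφ'
    (fun t => real_inner_comm (y - x) _ ▸ hH _ _) 0 1
  simp only [lineMap_apply_zero, lineMap_apply_one] at this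
  linarith

theorem le_add_inner_add_of_convexOn_of_inner_hessian_add_le {h q : F → ℝ} {gh gq : F → F}
    {Hh Hq : F → F →L[ℝ] F} {ℓ : ℝ} (hgh : ∀ z, HasGradientAt h (gh z) z)
    (hgq : ∀ z, HasGradientAt q (gq z) z) (hHh : ∀ z, HasFDerivAt gh (Hh z) z)
    (hHq : ∀ z, HasFDerivAt gq (Hq z) z) (hq : ConvexOn ℝ univ q)
    (hH : ∀ z v, ⟪v, Hh z v + Hq z v⟫ ≤ ℓ * ‖v‖ ^ 2) (x y : F) :
    h y ≤ h x + ⟪gh x, y - x⟫ + ℓ / 2 * ‖y - x‖ ^ 2 := by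
  have hsum := le_add_inner_add_of_inner_hessian_le (f := h + q) (fun z => (hgh z).add (hgq z))
    (fun z => (hHh z).add (hHq z)) hH x y
  have htangent := hq.add_inner_le_of_hasGradientAt (hgq x) y
  simp only [Pi.add_apply, inner_add_left] at hsum
  linarith

end InnerProductSpace

theorem prox_grad_step_descent_general {n : ℕ}
    (h q : EuclideanSpace ℝ (Fin n) → ℝ)
    (gradh gradq : EuclideanSpace ℝ (Fin n) → EuclideanSpace ℝ (Fin n))
    (Hh Hq : EuclideanSpace ℝ (Fin n) → (EuclideanSpace ℝ (Fin n) →L[ℝ] EuclideanSpace ℝ (Fin n)))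
    (P : EuclideanSpace ℝ (Fin n) → EReal)
    (ℓ β : ℝ)
    (hgradh : ∀ x, HasGradientAt h (gradh x) x)
    (hgradq : ∀ x, HasGradientAt q (gradq x) x)
    (hHh : ∀ x, HasFDerivAt gradh (Hh x) x)
    (hHq : ∀ x, HasFDerivAt gradq (Hq x) x)
    (hqconv : ConvexOn ℝ Set.univ q)
    (hbd : ∀ x v, -ℓ * ‖v‖ ^ 2 ≤ ⟪v, (Hh x) v + (Hq x) v⟫ ∧
      ⟪v, (Hh x) v + (Hq x) v⟫ ≤ ℓ * ‖v‖ ^ 2)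
    (x xp : EuclideanSpace ℝ (Fin n))
    (hmin : ∀ y, ((⟪gradh x, xp - x⟫ + (1 / (2 * β)) * ‖xp - x‖ ^ 2 : ℝ) : EReal) + P xp ≤
      ((⟪gradh x, y - x⟫ + (1 / (2 * β)) * ‖y - x‖ ^ 2 : ℝ) : EReal) + P y) :
    ((h xp : ℝ) : EReal) + P xp ≤
      ((h x : ℝ) : EReal) + P x - (((1 / (2 * β) - ℓ / 2) * ‖xp - x‖ ^ 2 : ℝ) : EReal) := by
  have hdescent := le_add_inner_add_of_convexOn_of_inner_hessian_add_le hgradh hgradq hHh hHq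
    hqconv (fun z v => (hbd z v).2) x xp
  have hprox := hmin x
  simp only [sub_self, inner_zero_right, norm_zero, zero_pow two_ne_zero, mul_zero, add_zero,
    EReal.coe_zero, zero_add] at hprox
  rw [sub_eq_add_neg, add_right_comm, ← EReal.coe_neg, ← EReal.coe_add, ← sub_eq_add_neg]
  exact EReal.coe_add_le_coe_add_of_coe_add_le hprox (by linarith)

/-- Descent property of one proximal gradient step under the relaxed step-size rule:
if `q` is convex, `−ℓ I ⪯ ∇²h + ∇²q ⪯ ℓ I`, `P` is proper closed, `β ∈ (0, 1/ℓ)`, and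
`x⁺` minimizes `y ↦ ⟨∇h(x), y − x⟩ + (1/(2β))‖y − x‖² + P(y)`, then
`h(x⁺) + P(x⁺) ≤ h(x) + P(x) − (1/(2β) − ℓ/2)‖x⁺ − x‖²`. -/
theorem prox_grad_step_descent {n : ℕ}
    (h q : EuclideanSpace ℝ (Fin n) → ℝ)
    (gradh gradq : EuclideanSpace ℝ (Fin n) → EuclideanSpace ℝ (Fin n))
    (Hh Hq : EuclideanSpace ℝ (Fin n) → (EuclideanSpace ℝ (Fin n) →L[ℝ] EuclideanSpace ℝ (Fin n)))
    (P : EuclideanSpace ℝ (Fin n) → EReal)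
    (ℓ β : ℝ) (hℓ : 0 < ℓ) (hβ : β ∈ Set.Ioo (0 : ℝ) (1 / ℓ))
    (hgradh : ∀ x, HasGradientAt h (gradh x) x)
    (hgradq : ∀ x, HasGradientAt q (gradq x) x)
    (hHh : ∀ x, HasFDerivAt gradh (Hh x) x) (hHhc : Continuous Hh)
    (hHq : ∀ x, HasFDerivAt gradq (Hq x) x) (hHqc : Continuous Hq)
    (hqconv : ConvexOn ℝ Set.univ q)
    (hbd : ∀ x v, -ℓ * ‖v‖ ^ 2 ≤ ⟪v, (Hh x) v + (Hq x) v⟫ ∧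
      ⟪v, (Hh x) v + (Hq x) v⟫ ≤ ℓ * ‖v‖ ^ 2)
    (hProper : ∃ y, P y ≠ ⊤) (hNoBot : ∀ y, P y ≠ ⊥) (hlsc : LowerSemicontinuous P)
    (x xp : EuclideanSpace ℝ (Fin n))
    (hx : P x ≠ ⊤)
    (hmin : ∀ y, ((⟪gradh x, xp - x⟫ + (1 / (2 * β)) * ‖xp - x‖ ^ 2 : ℝ) : EReal) + P xp ≤
      ((⟪gradh x, y - x⟫ + (1 / (2 * β)) * ‖y - x‖ ^ 2 : ℝ) : EReal) + P y) :
    ((h xp : ℝ) : EReal) + P xp ≤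
      ((h x : ℝ) : EReal) + P x - (((1 / (2 * β) - ℓ / 2) * ‖xp - x‖ ^ 2 : ℝ) : EReal) :=
  prox_grad_step_descent_general h q gradh gradq Hh Hq P ℓ β hgradh hgradq hHh hHq hqconv hbd x xp
    hmin
end

section
/- Let h, q : ℝⁿ → ℝ be twice continuously differentiable with q convex and −ℓ I ⪯ ∇²h + ∇²q ⪯ ℓ I for some ℓ > 0, let P be proper closed, β ∈ (0, 1/ℓ), and let {xᵗ} be the proximal gradient iterates. If x* is a cluster point of {xᵗ} along a subsequence {x^{t_i}} with ‖xᵗ⁺¹ − xᵗ‖ → 0, then lim_{i→∞} P(x^{t_i+1}) = P(x*). -/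
/-!
Comparing the proximal step at `x^{t_i}` with the competitor `x*` gives
`P(x^{t_i+1}) ≤ b_i - a_i + P(x*)`, where `a_i` and `b_i` are the linearised-plus-quadratic model
values at the step `x^{t_i+1} - x^{t_i}` and at `x* - x^{t_i}`. Both steps tend to zero and the
gradient is continuous at `x*`, so `a_i, b_i → 0` and `limsup P(x^{t_i+1}) ≤ P(x*)`. Since
`x^{t_i+1} → x*` as well, lower semicontinuity gives `P(x*) ≤ liminf P(x^{t_i+1})`.
-/

open scoped RealInnerProductSpace
open Filter Topology

theorem EReal.le_coe_sub_add_of_coe_add_le {a b : ℝ} {p q : EReal}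
    (h : (a : EReal) + p ≤ b + q) : p ≤ ((b - a : ℝ) : EReal) + q := by
  have h' : p + a ≤ b + q := by rwa [add_comm]
  rw [← EReal.le_sub_iff_add_le (.inl (EReal.coe_ne_bot a)) (.inl (EReal.coe_ne_top a))] at h'
  calc p ≤ b + q - a := h'
    _ = ((b - a : ℝ) : EReal) + q := by
      rw [sub_eq_add_neg, add_right_comm, EReal.coe_sub, sub_eq_add_neg]

theorem EReal.limsup_le_of_le_coe_add {ι : Type*} {l : Filter ι} [l.NeBot] {u : ι → EReal}
    {c : ι → ℝ} {L : EReal} (hc : Tendsto c l (𝓝 0)) (hu : ∀ᶠ i in l, u i ≤ c i + L) :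
    limsup u l ≤ L := by
  have hcL : Tendsto (fun i => (c i : EReal) + L) l (𝓝 L) := by
    have hadd := EReal.continuousAt_add (p := ((0 : ℝ), L)) (.inl (EReal.coe_ne_top 0))
      (.inl (EReal.coe_ne_bot 0))
    simpa [Function.comp_def] using
      hadd.tendsto.comp ((EReal.tendsto_coe.2 hc).prodMk_nhds tendsto_const_nhds)
  exact (limsup_le_limsup hu).trans_eq hcL.limsup_eq

theorem LowerSemicontinuous.le_liminf_comp_of_tendsto {α γ ι : Type*} [TopologicalSpace α]
    [CompleteLinearOrder γ] [TopologicalSpace γ] [OrderTopology γ] {f : α → γ}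
    (hf : LowerSemicontinuous f) {l : Filter ι} {y : ι → α} {a : α}
    (hy : Tendsto y l (𝓝 a)) : f a ≤ liminf (f ∘ y) l :=
  (hf.le_liminf a).trans (liminf_le_liminf_of_le hy)

theorem tendsto_inner_add_mul_norm_sq_zero {E ι : Type*} [NormedAddCommGroup E]
    [InnerProductSpace ℝ E] {l : Filter ι} {g d : ι → E} {g₀ : E} (c : ℝ)
    (hg : Tendsto g l (𝓝 g₀)) (hd : Tendsto d l (𝓝 0)) :
    Tendsto (fun i => ⟪g i, d i⟫ + c * ‖d i‖ ^ 2) l (𝓝 0) := by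
  simpa using (hg.inner hd).add ((hd.norm.pow 2).const_mul c)

theorem prox_grad_P_converges_along_subseq_general {n : ℕ}
    (gradh : EuclideanSpace ℝ (Fin n) → EuclideanSpace ℝ (Fin n))
    (Hh : EuclideanSpace ℝ (Fin n) → (EuclideanSpace ℝ (Fin n) →L[ℝ] EuclideanSpace ℝ (Fin n)))
    (P : EuclideanSpace ℝ (Fin n) → EReal)
    (β : ℝ)
    (hHh : ∀ x, HasFDerivAt gradh (Hh x) x)
    (hlsc : LowerSemicontinuous P)
    (x : ℕ → EuclideanSpace ℝ (Fin n))
    (hiter : ∀ t, ∀ y,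
      ((⟪gradh (x t), x (t + 1) - x t⟫ + (1 / (2 * β)) * ‖x (t + 1) - x t‖ ^ 2 : ℝ) : EReal)
          + P (x (t + 1)) ≤
        ((⟪gradh (x t), y - x t⟫ + (1 / (2 * β)) * ‖y - x t‖ ^ 2 : ℝ) : EReal) + P y)
    (xstar : EuclideanSpace ℝ (Fin n)) (ti : ℕ → ℕ) (hti : StrictMono ti)
    (hsub : Filter.Tendsto (fun i => x (ti i)) Filter.atTop (nhds xstar))
    (hsucc : Filter.Tendsto (fun t => ‖x (t + 1) - x t‖) Filter.atTop (nhds 0)) :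
    Filter.Tendsto (fun i => P (x (ti i + 1))) Filter.atTop (nhds (P xstar)) := by
  have hgrad : Tendsto (fun i => gradh (x (ti i))) atTop (𝓝 (gradh xstar)) :=
    (hHh xstar).continuousAt.tendsto.comp hsub
  have hstep : Tendsto (fun i => x (ti i + 1) - x (ti i)) atTop (𝓝 0) :=
    tendsto_zero_iff_norm_tendsto_zero.2 (hsucc.comp hti.tendsto_atTop)
  have hgap : Tendsto (fun i => xstar - x (ti i)) atTop (𝓝 0) := by
    simpa using (tendsto_const_nhds (x := xstar)).sub hsub
  have hnext : Tendsto (fun i => x (ti i + 1)) atTop (𝓝 xstar) := by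
    simpa using hstep.add hsub
  have hmodel := (tendsto_inner_add_mul_norm_sq_zero (1 / (2 * β)) hgrad hgap).sub
    (tendsto_inner_add_mul_norm_sq_zero (1 / (2 * β)) hgrad hstep)
  rw [sub_zero] at hmodel
  refine tendsto_of_le_liminf_of_limsup_le (hlsc.le_liminf_comp_of_tendsto hnext) ?_
  exact EReal.limsup_le_of_le_coe_add hmodel
    (Eventually.of_forall fun i => EReal.le_coe_sub_add_of_coe_add_le (hiter (ti i) xstar))

/-- For the proximal gradient iterates, if `x*` is a cluster point along a subsequence
`x^{t_i}` and `‖xᵗ⁺¹ − xᵗ‖ → 0`, then `P(x^{t_i+1}) → P(x*)`. -/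
theorem prox_grad_P_converges_along_subseq {n : ℕ}
    (h q : EuclideanSpace ℝ (Fin n) → ℝ)
    (gradh gradq : EuclideanSpace ℝ (Fin n) → EuclideanSpace ℝ (Fin n))
    (Hh Hq : EuclideanSpace ℝ (Fin n) → (EuclideanSpace ℝ (Fin n) →L[ℝ] EuclideanSpace ℝ (Fin n)))
    (P : EuclideanSpace ℝ (Fin n) → EReal)
    (ℓ β : ℝ) (hℓ : 0 < ℓ) (hβ : β ∈ Set.Ioo (0 : ℝ) (1 / ℓ))
    (hgradh : ∀ x, HasGradientAt h (gradh x) x)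
    (hgradq : ∀ x, HasGradientAt q (gradq x) x)
    (hHh : ∀ x, HasFDerivAt gradh (Hh x) x) (hHhc : Continuous Hh)
    (hHq : ∀ x, HasFDerivAt gradq (Hq x) x) (hHqc : Continuous Hq)
    (hqconv : ConvexOn ℝ Set.univ q)
    (hbd : ∀ x v, -ℓ * ‖v‖ ^ 2 ≤ ⟪v, (Hh x) v + (Hq x) v⟫ ∧
      ⟪v, (Hh x) v + (Hq x) v⟫ ≤ ℓ * ‖v‖ ^ 2)
    (hProper : ∃ y, P y ≠ ⊤) (hNoBot : ∀ y, P y ≠ ⊥) (hlsc : LowerSemicontinuous P)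
    (x : ℕ → EuclideanSpace ℝ (Fin n))
    (hiter : ∀ t, ∀ y,
      ((⟪gradh (x t), x (t + 1) - x t⟫ + (1 / (2 * β)) * ‖x (t + 1) - x t‖ ^ 2 : ℝ) : EReal)
          + P (x (t + 1)) ≤
        ((⟪gradh (x t), y - x t⟫ + (1 / (2 * β)) * ‖y - x t‖ ^ 2 : ℝ) : EReal) + P y)
    (xstar : EuclideanSpace ℝ (Fin n)) (ti : ℕ → ℕ) (hti : StrictMono ti)
    (hsub : Filter.Tendsto (fun i => x (ti i)) Filter.atTop (nhds xstar))
    (hsucc : Filter.Tendsto (fun t => ‖x (t + 1) - x t‖) Filter.atTop (nhds 0)) :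
    Filter.Tendsto (fun i => P (x (ti i + 1))) Filter.atTop (nhds (P xstar)) :=
  prox_grad_P_converges_along_subseq_general gradh Hh P β hHh hlsc x hiter xstar ti hti hsub hsucc
end

section
/- Consider ℝ², fix η ∈ (0,1], let C = {x ∈ ℝ² : x₂ = 0} and D = {(0,0), (2,η), (2,−η)}. For any β > 0, the ADMM iteration y₁ᵗ⁺¹ = P_C(xᵗ − z₁ᵗ/β), y₂ᵗ⁺¹ ∈ P_D(xᵗ − z₂ᵗ/β) (choosing the element of D closest to y₂ᵗ when ambiguous), xᵗ⁺¹ = (1/2)(y₁ᵗ⁺¹ + z₁ᵗ/β + y₂ᵗ⁺¹ + z₂ᵗ/β), z₁ᵗ⁺¹ = z₁ᵗ − β(xᵗ⁺¹ − y₁ᵗ⁺¹), z₂ᵗ⁺¹ = z₂ᵗ − β(xᵗ⁺¹ − y₂ᵗ⁺¹), initialized at x⁰ = (2,0), z₁⁰ = (0, −βη), z₂⁰ = (0, βη), produces an 8-periodic sequence: for all 1 ≤ t ≤ 8 and k ≥ 0, the iterate at time 8k + t equals the iterate at time t, with y₁ᵗ = (2,0), y₂ᵗ = (2,−η) for 1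 ≤ t ≤ 4 and (2,η) for 5 ≤ t ≤ 8, xᵗ = (2, −η/2) for 1 ≤ t ≤ 4 and (2, η/2) for 5 ≤ t ≤ 8, z₁ᵗ = (0, (2 − |t−4|)βη/2), z₂ᵗ = −z₁ᵗ. In particular {xᵗ} does not converge. -/
noncomputable section

/-- The vector `(a, b)` in the Euclidean plane. -/
def vec2 (a b : ℝ) : EuclideanSpace ℝ (Fin 2) :=
  (WithLp.equiv 2 (Fin 2 → ℝ)).symm ![a, b]

/-- First coordinate of a vector in the Euclidean plane. -/
def coord1 (w : EuclideanSpace ℝ (Fin 2)) : ℝ := (WithLp.equiv 2 (Fin 2 → ℝ)) w 0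

lemma coord1_vec2 (a b : ℝ) : coord1 (vec2 a b) = a := rfl

lemma vec2_add (a b c d : ℝ) : vec2 a b + vec2 c d = vec2 (a+c) (b+d) := by
  ext i; fin_cases i <;> rfl

lemma vec2_sub (a b c d : ℝ) : vec2 a b - vec2 c d = vec2 (a-c) (b-d) := by
  ext i; fin_cases i <;> rfl

lemma vec2_smul (r a b : ℝ) : r • vec2 a b = vec2 (r*a) (r*b) := by
  ext i; fin_cases i <;> rfl

lemma vec2_neg (a b : ℝ) : -vec2 a b = vec2 (-a) (-b) := by
  ext i; fin_cases i <;> rfl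

lemma vec2_inj {a b c d : ℝ} (h : vec2 a b = vec2 c d) : a = c ∧ b = d := by
  constructor
  · have := congrFun (congrArg (WithLp.equiv 2 (Fin 2 → ℝ)) h) 0; simpa [vec2] using this
  · have := congrFun (congrArg (WithLp.equiv 2 (Fin 2 → ℝ)) h) 1; simpa [vec2] using this

lemma vec2_congr {a b c d : ℝ} (h1 : a = c) (h2 : b = d) : vec2 a b = vec2 c d := by
  rw [h1, h2]

lemma norm_vec2 (a b : ℝ) : ‖vec2 a b‖ = Real.sqrt (a^2 + b^2) := by
  rw [EuclideanSpace.norm_eq]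
  simp [vec2, Fin.sum_univ_two, sq_abs]

lemma sqrt_le_rev {X Y : ℝ} (hY : 0 ≤ Y) (h : Real.sqrt X ≤ Real.sqrt Y) : X ≤ Y := by
  by_cases hX : 0 ≤ X
  · calc X = Real.sqrt X ^ 2 := (Real.sq_sqrt hX).symm
      _ ≤ Real.sqrt Y ^ 2 := by gcongr
      _ = Y := Real.sq_sqrt hY
  · linarith

lemma diffcalc (β u v w : ℝ) (hw : u - β⁻¹*v = w) :
    vec2 2 u - β⁻¹ • vec2 0 v = vec2 2 w := by
  rw [vec2_smul, vec2_sub]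
  exact vec2_congr (by ring) hw

/-- The closed-form description of one 8-cycle of iterates starting after time `t`. -/
def CycProp (η β : ℝ) (y1 y2 x z1 z2 : ℕ → EuclideanSpace ℝ (Fin 2)) (t : ℕ) : Prop :=
  ∀ i : ℕ, 1 ≤ i → i ≤ 8 →
    y1 (t+i) = vec2 2 0 ∧
    y2 (t+i) = (if i ≤ 4 then vec2 2 (-η) else vec2 2 η) ∧
    x (t+i) = (if i ≤ 4 then vec2 2 (-(η/2)) else vec2 2 (η/2)) ∧
    z1 (t+i) = vec2 0 ((2 - |(i:ℝ)-4|) * β * η / 2) ∧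
    z2 (t+i) = vec2 0 (-((2 - |(i:ℝ)-4|) * β * η / 2))

set_option maxHeartbeats 1600000 in
/-- Divergence of ADMM with an injective (non-surjective) linear map:
for `C = {x : x₂ = 0}`, `D = {(0,0),(2,η),(2,−η)}`, `η ∈ (0,1]`, any `β > 0`, and the
initialization `x⁰ = (2,0)`, `z₁⁰ = (0,−βη)`, `z₂⁰ = (0,βη)`, the ADMM iterates form an
8-periodic cycle with the indicated closed form; in particular `{xᵗ}` does not converge. -/
theorem admm_divergence_example
    (η β : ℝ) (hη : η ∈ Set.Ioc (0 : ℝ) 1) (hβ : 0 < β)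
    (y1 y2 x z1 z2 : ℕ → EuclideanSpace ℝ (Fin 2))
    (D : Set (EuclideanSpace ℝ (Fin 2)))
    (hD : D = {vec2 0 0, vec2 2 η, vec2 2 (-η)})
    (hinitx : x 0 = vec2 2 0)
    (hinitz1 : z1 0 = vec2 0 (-(β * η)))
    (hinitz2 : z2 0 = vec2 0 (β * η))
    -- y₁-update: projection onto C
    (hy1 : ∀ t, y1 (t + 1) = vec2 (coord1 (x t - β⁻¹ • z1 t)) 0)
    -- y₂-update: projection onto D, tie-broken towards the previous iterate y₂ᵗ
    (hy2mem : ∀ t, y2 (t + 1) ∈ D)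
    (hy2proj : ∀ t, ∀ d ∈ D,
      ‖y2 (t + 1) - (x t - β⁻¹ • z2 t)‖ ≤ ‖d - (x t - β⁻¹ • z2 t)‖)
    (hy2tie : ∀ t, ∀ d ∈ D,
      ‖d - (x t - β⁻¹ • z2 t)‖ = ‖y2 (t + 1) - (x t - β⁻¹ • z2 t)‖ →
        ‖y2 (t + 1) - y2 t‖ ≤ ‖d - y2 t‖)
    -- x-update
    (hx : ∀ t, x (t + 1) =
      (1 / 2 : ℝ) • (y1 (t + 1) + β⁻¹ • z1 t + y2 (t + 1) + β⁻¹ • z2 t))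
    -- z-updates
    (hz1 : ∀ t, z1 (t + 1) = z1 t - β • (x (t + 1) - y1 (t + 1)))
    (hz2 : ∀ t, z2 (t + 1) = z2 t - β • (x (t + 1) - y2 (t + 1))) :
    (∀ k t : ℕ, 1 ≤ t → t ≤ 8 →
      y1 (8 * k + t) = y1 t ∧ y2 (8 * k + t) = y2 t ∧ x (8 * k + t) = x t ∧
      z1 (8 * k + t) = z1 t ∧ z2 (8 * k + t) = z2 t) ∧
    (∀ t : ℕ, 1 ≤ t → t ≤ 8 →
      y1 t = vec2 2 0 ∧
      y2 t = (if t ≤ 4 then vec2 2 (-η) else vec2 2 η) ∧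
      x t = (if t ≤ 4 then vec2 2 (-(η / 2)) else vec2 2 (η / 2)) ∧
      z1 t = vec2 0 ((2 - |(t : ℝ) - 4|) * β * η / 2) ∧
      z2 t = -z1 t) ∧
    ¬ ∃ l, Filter.Tendsto x Filter.atTop (nhds l) := by
  obtain ⟨hη0, hη1⟩ := hη
  have hβne : β ≠ 0 := ne_of_gt hβ
  -- unique projection onto D when the target is (2, c) with -η ≤ c < 0
  have projNeg : ∀ t c, -η ≤ c → c < 0 → x t - β⁻¹ • z2 t = vec2 2 c →
      y2 (t+1) = vec2 2 (-η) := by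
    intro t c hc1 hc2 hq
    have hm := hy2mem t
    rw [hD] at hm
    simp only [Set.mem_insert_iff, Set.mem_singleton_iff] at hm
    have hp := hy2proj t (vec2 2 (-η)) (by simp [hD])
    rw [hq] at hp
    rcases hm with h|h|h
    · exfalso
      rw [h, vec2_sub, vec2_sub, norm_vec2, norm_vec2] at hp
      have h2 := sqrt_le_rev (by positivity) hp
      nlinarith
    · exfalso
      rw [h, vec2_sub, vec2_sub, norm_vec2, norm_vec2] at hp
      have h2 := sqrt_le_rev (by positivity) hp
      nlinarith
    · exact h
  -- unique projection onto D when the target is (2, c) with 0 < c ≤ η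
  have projPos : ∀ t c, 0 < c → c ≤ η → x t - β⁻¹ • z2 t = vec2 2 c →
      y2 (t+1) = vec2 2 η := by
    intro t c hc1 hc2 hq
    have hm := hy2mem t
    rw [hD] at hm
    simp only [Set.mem_insert_iff, Set.mem_singleton_iff] at hm
    have hp := hy2proj t (vec2 2 η) (by simp [hD])
    rw [hq] at hp
    rcases hm with h|h|h
    · exfalso
      rw [h, vec2_sub, vec2_sub, norm_vec2, norm_vec2] at hp
      have h2 := sqrt_le_rev (by positivity) hp
      nlinarith
    · exact h
    · exfalso
      rw [h, vec2_sub, vec2_sub, norm_vec2, norm_vec2] at hp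
      have h2 := sqrt_le_rev (by positivity) hp
      nlinarith
  -- tie-breaking when the target is (2, 0)
  have tie : ∀ t, x t - β⁻¹ • z2 t = vec2 2 0 →
      (y2 t = vec2 2 η ∨ y2 t = vec2 2 (-η)) → y2 (t+1) = y2 t := by
    intro t hq hprev
    have hm := hy2mem t
    rw [hD] at hm
    simp only [Set.mem_insert_iff, Set.mem_singleton_iff] at hm
    have hpη := hy2proj t (vec2 2 η) (by simp [hD])
    rw [hq] at hpη
    have hcand : y2 (t+1) = vec2 2 η ∨ y2 (t+1) = vec2 2 (-η) := by
      rcases hm with h|h|h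
      · exfalso
        rw [h, vec2_sub, vec2_sub, norm_vec2, norm_vec2] at hpη
        have h2 := sqrt_le_rev (by positivity) hpη
        nlinarith
      · exact Or.inl h
      · exact Or.inr h
    have hnorm : ‖y2 (t+1) - vec2 2 0‖ = η := by
      rcases hcand with h|h
      · rw [h, vec2_sub, norm_vec2, show ((2:ℝ)-2)^2+(η-0)^2 = η^2 by ring,
          Real.sqrt_sq hη0.le]
      · rw [h, vec2_sub, norm_vec2, show ((2:ℝ)-2)^2+(-η-0)^2 = η^2 by ring,
          Real.sqrt_sq hη0.le]
    have hnormp : ‖y2 t - vec2 2 0‖ = η := by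
      rcases hprev with h|h
      · rw [h, vec2_sub, norm_vec2, show ((2:ℝ)-2)^2+(η-0)^2 = η^2 by ring,
          Real.sqrt_sq hη0.le]
      · rw [h, vec2_sub, norm_vec2, show ((2:ℝ)-2)^2+(-η-0)^2 = η^2 by ring,
          Real.sqrt_sq hη0.le]
    have hdmem : y2 t ∈ D := by rcases hprev with h|h <;> simp [hD, h]
    have htie := hy2tie t (y2 t) hdmem (by rw [hq, hnormp, hnorm])
    rw [sub_self, norm_zero] at htie
    exact sub_eq_zero.mp (norm_le_zero_iff.mp htie)
  -- one full 8-step cycle from a suitable state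
  have step8 : ∀ t a, 0 ≤ a → a ≤ η/2 →
      x t = vec2 2 a → z1 t = vec2 0 (-(β*η)) → z2 t = vec2 0 (β*η) →
      CycProp η β y1 y2 x z1 z2 t := by
    intro t a ha0 ha1 hx0 hz10 hz20
    -- round 1
    have hq1 : x t - β⁻¹ • z2 t = vec2 2 (a - η) := by
      rw [hx0, hz20]; exact diffcalc β _ _ _ (by field_simp <;> ring)
    have hy1a : y1 (t+1) = vec2 2 0 := by
      rw [hy1 t, hx0, hz10, diffcalc β _ _ (a + η) (by field_simp <;> ring), coord1_vec2]
    have hy2a : y2 (t+1) = vec2 2 (-η) :=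
      projNeg t (a - η) (by linarith) (by linarith) hq1
    have hxa : x (t+1) = vec2 2 (-(η/2)) := by
      rw [hx t, hy1a, hy2a, hz10, hz20]
      simp only [vec2_smul, vec2_add]
      exact vec2_congr (by ring) (by field_simp <;> ring)
    have hz1a : z1 (t+1) = vec2 0 (-(β*η/2)) := by
      rw [hz1 t, hxa, hy1a, hz10]
      simp only [vec2_sub, vec2_smul]
      exact vec2_congr (by ring) (by ring)
    have hz2a : z2 (t+1) = vec2 0 (β*η/2) := by
      rw [hz2 t, hxa, hy2a, hz20]
      simp only [vec2_sub, vec2_smul]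
      exact vec2_congr (by ring) (by ring)
    -- round 2
    have hq2 : x (t+1) - β⁻¹ • z2 (t+1) = vec2 2 (-η) := by
      rw [hxa, hz2a]; exact diffcalc β _ _ _ (by field_simp <;> ring)
    have hy1b : y1 (t+2) = vec2 2 0 := by
      rw [show t+2 = t+1+1 from rfl, hy1 (t+1), hxa, hz1a,
        diffcalc β _ _ 0 (by field_simp <;> ring), coord1_vec2]
    have hy2b : y2 (t+2) = vec2 2 (-η) :=
      projNeg (t+1) (-η) (by linarith) (by linarith) hq2
    have hxb : x (t+2) = vec2 2 (-(η/2)) := by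
      rw [show t+2 = t+1+1 from rfl, hx (t+1), show t+1+1 = t+2 from rfl, hy1b, hy2b,
        hz1a, hz2a]
      simp only [vec2_smul, vec2_add]
      exact vec2_congr (by ring) (by field_simp <;> ring)
    have hz1b : z1 (t+2) = vec2 0 0 := by
      rw [show t+2 = t+1+1 from rfl, hz1 (t+1), show t+1+1 = t+2 from rfl, hxb, hy1b,
        hz1a]
      simp only [vec2_sub, vec2_smul]
      exact vec2_congr (by ring) (by ring)
    have hz2b : z2 (t+2) = vec2 0 0 := by
      rw [show t+2 = t+1+1 from rfl, hz2 (t+1), show t+1+1 = t+2 from rfl, hxb, hy2b,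
        hz2a]
      simp only [vec2_sub, vec2_smul]
      exact vec2_congr (by ring) (by ring)
    -- round 3
    have hq3 : x (t+2) - β⁻¹ • z2 (t+2) = vec2 2 (-(η/2)) := by
      rw [hxb, hz2b]; exact diffcalc β _ _ _ (by field_simp <;> ring)
    have hy1c : y1 (t+3) = vec2 2 0 := by
      rw [show t+3 = t+2+1 from rfl, hy1 (t+2), hxb, hz1b,
        diffcalc β _ _ (-(η/2)) (by field_simp <;> ring), coord1_vec2]
    have hy2c : y2 (t+3) = vec2 2 (-η) :=
      projNeg (t+2) (-(η/2)) (by linarith) (by linarith) hq3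
    have hxc : x (t+3) = vec2 2 (-(η/2)) := by
      rw [show t+3 = t+2+1 from rfl, hx (t+2), show t+2+1 = t+3 from rfl, hy1c, hy2c,
        hz1b, hz2b]
      simp only [vec2_smul, vec2_add]
      exact vec2_congr (by ring) (by field_simp <;> ring)
    have hz1c : z1 (t+3) = vec2 0 (β*η/2) := by
      rw [show t+3 = t+2+1 from rfl, hz1 (t+2), show t+2+1 = t+3 from rfl, hxc, hy1c,
        hz1b]
      simp only [vec2_sub, vec2_smul]
      exact vec2_congr (by ring) (by ring)
    have hz2c : z2 (t+3) = vec2 0 (-(β*η/2)) := by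
      rw [show t+3 = t+2+1 from rfl, hz2 (t+2), show t+2+1 = t+3 from rfl, hxc, hy2c,
        hz2b]
      simp only [vec2_sub, vec2_smul]
      exact vec2_congr (by ring) (by ring)
    -- round 4 (tie)
    have hq4 : x (t+3) - β⁻¹ • z2 (t+3) = vec2 2 0 := by
      rw [hxc, hz2c]; exact diffcalc β _ _ _ (by field_simp <;> ring)
    have hy1d : y1 (t+4) = vec2 2 0 := by
      rw [show t+4 = t+3+1 from rfl, hy1 (t+3), hxc, hz1c,
        diffcalc β _ _ (-η) (by field_simp <;> ring), coord1_vec2]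
    have hy2d : y2 (t+4) = vec2 2 (-η) := by
      rw [show t+4 = t+3+1 from rfl, tie (t+3) hq4 (Or.inr hy2c), hy2c]
    have hxd : x (t+4) = vec2 2 (-(η/2)) := by
      rw [show t+4 = t+3+1 from rfl, hx (t+3), show t+3+1 = t+4 from rfl, hy1d, hy2d,
        hz1c, hz2c]
      simp only [vec2_smul, vec2_add]
      exact vec2_congr (by ring) (by field_simp <;> ring)
    have hz1d : z1 (t+4) = vec2 0 (β*η) := by
      rw [show t+4 = t+3+1 from rfl, hz1 (t+3), show t+3+1 = t+4 from rfl, hxd, hy1d,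
        hz1c]
      simp only [vec2_sub, vec2_smul]
      exact vec2_congr (by ring) (by ring)
    have hz2d : z2 (t+4) = vec2 0 (-(β*η)) := by
      rw [show t+4 = t+3+1 from rfl, hz2 (t+3), show t+3+1 = t+4 from rfl, hxd, hy2d,
        hz2c]
      simp only [vec2_sub, vec2_smul]
      exact vec2_congr (by ring) (by ring)
    -- round 5
    have hq5 : x (t+4) - β⁻¹ • z2 (t+4) = vec2 2 (η/2) := by
      rw [hxd, hz2d]; exact diffcalc β _ _ _ (by field_simp <;> ring)
    have hy1e : y1 (t+5) = vec2 2 0 := by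
      rw [show t+5 = t+4+1 from rfl, hy1 (t+4), hxd, hz1d,
        diffcalc β _ _ (-(3*η/2)) (by field_simp <;> ring), coord1_vec2]
    have hy2e : y2 (t+5) = vec2 2 η :=
      projPos (t+4) (η/2) (by linarith) (by linarith) hq5
    have hxe : x (t+5) = vec2 2 (η/2) := by
      rw [show t+5 = t+4+1 from rfl, hx (t+4), show t+4+1 = t+5 from rfl, hy1e, hy2e,
        hz1d, hz2d]
      simp only [vec2_smul, vec2_add]
      exact vec2_congr (by ring) (by field_simp <;> ring)
    have hz1e : z1 (t+5) = vec2 0 (β*η/2) := by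
      rw [show t+5 = t+4+1 from rfl, hz1 (t+4), show t+4+1 = t+5 from rfl, hxe, hy1e,
        hz1d]
      simp only [vec2_sub, vec2_smul]
      exact vec2_congr (by ring) (by ring)
    have hz2e : z2 (t+5) = vec2 0 (-(β*η/2)) := by
      rw [show t+5 = t+4+1 from rfl, hz2 (t+4), show t+4+1 = t+5 from rfl, hxe, hy2e,
        hz2d]
      simp only [vec2_sub, vec2_smul]
      exact vec2_congr (by ring) (by ring)
    -- round 6
    have hq6 : x (t+5) - β⁻¹ • z2 (t+5) = vec2 2 η := by
      rw [hxe, hz2e]; exact diffcalc β _ _ _ (by field_simp <;> ring)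
    have hy1f : y1 (t+6) = vec2 2 0 := by
      rw [show t+6 = t+5+1 from rfl, hy1 (t+5), hxe, hz1e,
        diffcalc β _ _ 0 (by field_simp <;> ring), coord1_vec2]
    have hy2f : y2 (t+6) = vec2 2 η :=
      projPos (t+5) η (by linarith) (by linarith) hq6
    have hxf : x (t+6) = vec2 2 (η/2) := by
      rw [show t+6 = t+5+1 from rfl, hx (t+5), show t+5+1 = t+6 from rfl, hy1f, hy2f,
        hz1e, hz2e]
      simp only [vec2_smul, vec2_add]
      exact vec2_congr (by ring) (by field_simp <;> ring)
    have hz1f : z1 (t+6) = vec2 0 0 := by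
      rw [show t+6 = t+5+1 from rfl, hz1 (t+5), show t+5+1 = t+6 from rfl, hxf, hy1f,
        hz1e]
      simp only [vec2_sub, vec2_smul]
      exact vec2_congr (by ring) (by ring)
    have hz2f : z2 (t+6) = vec2 0 0 := by
      rw [show t+6 = t+5+1 from rfl, hz2 (t+5), show t+5+1 = t+6 from rfl, hxf, hy2f,
        hz2e]
      simp only [vec2_sub, vec2_smul]
      exact vec2_congr (by ring) (by ring)
    -- round 7
    have hq7 : x (t+6) - β⁻¹ • z2 (t+6) = vec2 2 (η/2) := by
      rw [hxf, hz2f]; exact diffcalc β _ _ _ (by field_simp <;> ring)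
    have hy1g : y1 (t+7) = vec2 2 0 := by
      rw [show t+7 = t+6+1 from rfl, hy1 (t+6), hxf, hz1f,
        diffcalc β _ _ (η/2) (by field_simp <;> ring), coord1_vec2]
    have hy2g : y2 (t+7) = vec2 2 η :=
      projPos (t+6) (η/2) (by linarith) (by linarith) hq7
    have hxg : x (t+7) = vec2 2 (η/2) := by
      rw [show t+7 = t+6+1 from rfl, hx (t+6), show t+6+1 = t+7 from rfl, hy1g, hy2g,
        hz1f, hz2f]
      simp only [vec2_smul, vec2_add]
      exact vec2_congr (by ring) (by field_simp <;> ring)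
    have hz1g : z1 (t+7) = vec2 0 (-(β*η/2)) := by
      rw [show t+7 = t+6+1 from rfl, hz1 (t+6), show t+6+1 = t+7 from rfl, hxg, hy1g,
        hz1f]
      simp only [vec2_sub, vec2_smul]
      exact vec2_congr (by ring) (by ring)
    have hz2g : z2 (t+7) = vec2 0 (β*η/2) := by
      rw [show t+7 = t+6+1 from rfl, hz2 (t+6), show t+6+1 = t+7 from rfl, hxg, hy2g,
        hz2f]
      simp only [vec2_sub, vec2_smul]
      exact vec2_congr (by ring) (by ring)
    -- round 8 (tie)
    have hq8 : x (t+7) - β⁻¹ • z2 (t+7) = vec2 2 0 := by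
      rw [hxg, hz2g]; exact diffcalc β _ _ _ (by field_simp <;> ring)
    have hy1h : y1 (t+8) = vec2 2 0 := by
      rw [show t+8 = t+7+1 from rfl, hy1 (t+7), hxg, hz1g,
        diffcalc β _ _ η (by field_simp <;> ring), coord1_vec2]
    have hy2h : y2 (t+8) = vec2 2 η := by
      rw [show t+8 = t+7+1 from rfl, tie (t+7) hq8 (Or.inl hy2g), hy2g]
    have hxh : x (t+8) = vec2 2 (η/2) := by
      rw [show t+8 = t+7+1 from rfl, hx (t+7), show t+7+1 = t+8 from rfl, hy1h, hy2h,
        hz1g, hz2g]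
      simp only [vec2_smul, vec2_add]
      exact vec2_congr (by ring) (by field_simp <;> ring)
    have hz1h : z1 (t+8) = vec2 0 (-(β*η)) := by
      rw [show t+8 = t+7+1 from rfl, hz1 (t+7), show t+7+1 = t+8 from rfl, hxh, hy1h,
        hz1g]
      simp only [vec2_sub, vec2_smul]
      exact vec2_congr (by ring) (by ring)
    have hz2h : z2 (t+8) = vec2 0 (β*η) := by
      rw [show t+8 = t+7+1 from rfl, hz2 (t+7), show t+7+1 = t+8 from rfl, hxh, hy2h,
        hz2g]
      simp only [vec2_sub, vec2_smul]
      exact vec2_congr (by ring) (by ring)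
    -- assemble
    intro i hi1 hi8
    interval_cases i
    · refine ⟨hy1a, by norm_num [hy2a], by norm_num [hxa], ?_, ?_⟩
      · rw [hz1a]; exact vec2_congr rfl (by norm_num <;> ring)
      · rw [hz2a]; exact vec2_congr rfl (by norm_num <;> ring)
    · refine ⟨hy1b, by norm_num [hy2b], by norm_num [hxb], ?_, ?_⟩
      · rw [hz1b]; exact vec2_congr rfl (by norm_num)
      · rw [hz2b]; exact vec2_congr rfl (by norm_num)
    · refine ⟨hy1c, by norm_num [hy2c], by norm_num [hxc], ?_, ?_⟩
      · rw [hz1c]; exact vec2_congr rfl (by norm_num <;> ring)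
      · rw [hz2c]; exact vec2_congr rfl (by norm_num <;> ring)
    · refine ⟨hy1d, by norm_num [hy2d], by norm_num [hxd], ?_, ?_⟩
      · rw [hz1d]; exact vec2_congr rfl (by norm_num <;> ring)
      · rw [hz2d]; exact vec2_congr rfl (by norm_num <;> ring)
    · refine ⟨hy1e, by norm_num [hy2e], by norm_num [hxe], ?_, ?_⟩
      · rw [hz1e]; exact vec2_congr rfl (by norm_num <;> ring)
      · rw [hz2e]; exact vec2_congr rfl (by norm_num <;> ring)
    · refine ⟨hy1f, by norm_num [hy2f], by norm_num [hxf], ?_, ?_⟩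
      · rw [hz1f]; exact vec2_congr rfl (by norm_num)
      · rw [hz2f]; exact vec2_congr rfl (by norm_num)
    · refine ⟨hy1g, by norm_num [hy2g], by norm_num [hxg], ?_, ?_⟩
      · rw [hz1g]; exact vec2_congr rfl (by norm_num <;> ring)
      · rw [hz2g]; exact vec2_congr rfl (by norm_num <;> ring)
    · refine ⟨hy1h, by norm_num [hy2h], by norm_num [hxh], ?_, ?_⟩
      · rw [hz1h]; exact vec2_congr rfl (by norm_num <;> ring)
      · rw [hz2h]; exact vec2_congr rfl (by norm_num <;> ring)
  -- the state at every time 8k is suitable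
  have vals : ∀ k, CycProp η β y1 y2 x z1 z2 (8*k) := by
    intro k
    induction k with
    | zero => exact step8 0 0 le_rfl (by linarith) hinitx hinitz1 hinitz2
    | succ k ih =>
      have h8 := ih 8 (by norm_num) (by norm_num)
      have hx8 : x (8*k+8) = vec2 2 (η/2) := by
        have := h8.2.2.1; norm_num at this; exact this
      have hz18 : z1 (8*k+8) = vec2 0 (-(β*η)) := by
        rw [h8.2.2.2.1]; exact vec2_congr rfl (by norm_num <;> ring)
      have hz28 : z2 (8*k+8) = vec2 0 (β*η) := by
        rw [h8.2.2.2.2]; exact vec2_congr rfl (by norm_num <;> ring)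
      exact step8 (8*k+8) (η/2) (by linarith) le_rfl hx8 hz18 hz28
  have v0 : CycProp η β y1 y2 x z1 z2 0 := vals 0
  refine ⟨?_, ?_, ?_⟩
  · -- periodicity
    intro k t ht1 ht8
    obtain ⟨a1, a2, a3, a4, a5⟩ := vals k t ht1 ht8
    obtain ⟨b1, b2, b3, b4, b5⟩ := v0 t ht1 ht8
    rw [zero_add] at b1 b2 b3 b4 b5
    exact ⟨a1.trans b1.symm, a2.trans b2.symm, a3.trans b3.symm,
      a4.trans b4.symm, a5.trans b5.symm⟩
  · -- closed form
    intro t ht1 ht8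
    obtain ⟨b1, b2, b3, b4, b5⟩ := v0 t ht1 ht8
    rw [zero_add] at b1 b2 b3 b4 b5
    exact ⟨b1, b2, b3, b4, by rw [b5, b4, vec2_neg]; exact vec2_congr (by norm_num) rfl⟩
  · -- non-convergence
    rintro ⟨l, hl⟩
    have hmono : ∀ c : ℕ, Filter.Tendsto (fun k : ℕ => 8*k+c) Filter.atTop Filter.atTop :=
      fun c => Filter.tendsto_atTop_atTop.mpr fun b => ⟨b, fun a ha => by omega⟩
    have hx1 : ∀ k : ℕ, x (8*k+1) = vec2 2 (-(η/2)) := by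
      intro k
      have := (vals k 1 (by norm_num) (by norm_num)).2.2.1
      norm_num at this; exact this
    have hx5 : ∀ k : ℕ, x (8*k+5) = vec2 2 (η/2) := by
      intro k
      have := (vals k 5 (by norm_num) (by norm_num)).2.2.1
      norm_num at this; exact this
    have t1 : Filter.Tendsto (fun k : ℕ => x (8*k+1)) Filter.atTop (nhds l) :=
      hl.comp (hmono 1)
    have t5 : Filter.Tendsto (fun k : ℕ => x (8*k+5)) Filter.atTop (nhds l) :=
      hl.comp (hmono 5)
    rw [funext hx1] at t1
    rw [funext hx5] at t5
    have e1 : l = vec2 2 (-(η/2)) := tendsto_nhds_unique t1 tendsto_const_nhds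
    have e5 : l = vec2 2 (η/2) := tendsto_nhds_unique t5 tendsto_const_nhds
    have := (vec2_inj (e1.symm.trans e5)).2
    linarith
end
end

section
/- Let M be an m×n real matrix of full row rank and β > 0. If z¹ = z⁰ − β(Mx¹ − y¹), y⁰ = Mx⁰, M*z⁰ = ∇h(x⁰), M*z¹ = ∇h(x¹) + ∇φ(x¹) − ∇φ(x⁰), and x¹ = x⁰, then z¹ = z⁰ and y¹ = y⁰, provided MM* ⪰ σI for some σ > 0 and ‖∇h(x) + ∇φ(x) − ∇h(x') − ∇φ(x')‖ ≤ K‖x − x'‖ for all x, x' and some K ≥ 0. -/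
open scoped RealInnerProductSpace

/-- Key step of Theorem 3.1(ii): with the special initialization `M*z⁰ = ∇h(x⁰)`,
`y⁰ = Mx⁰`, if the first proximal ADMM iterate satisfies `x¹ = x⁰`, then `z¹ = z⁰`
and `y¹ = y⁰` (under `MM* ⪰ σI`, `σ > 0`, and a Lipschitz-type bound on `∇h + ∇φ`). -/
theorem admm_fixed_first_iterate {n m : ℕ}
    (M : EuclideanSpace ℝ (Fin n) →L[ℝ] EuclideanSpace ℝ (Fin m))
    (σ β K : ℝ) (hσ : 0 < σ) (hβ : 0 < β) (hK : 0 ≤ K)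
    (hMM : ∀ w, σ * ‖w‖ ^ 2 ≤ ⟪w, M ((ContinuousLinearMap.adjoint M) w)⟫)
    (gradh gradφ : EuclideanSpace ℝ (Fin n) → EuclideanSpace ℝ (Fin n))
    (hLip : ∀ x x', ‖gradh x + gradφ x - gradh x' - gradφ x'‖ ≤ K * ‖x - x'‖)
    (x0 x1 : EuclideanSpace ℝ (Fin n)) (y0 y1 z0 z1 : EuclideanSpace ℝ (Fin m))
    (hz1 : z1 = z0 - β • (M x1 - y1))
    (hy0 : y0 = M x0)
    (hz0init : (ContinuousLinearMap.adjoint M) z0 = gradh x0)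
    (hz1rel : (ContinuousLinearMap.adjoint M) z1 = gradh x1 + gradφ x1 - gradφ x0)
    (hx : x1 = x0) :
    z1 = z0 ∧ y1 = y0 := by
  subst hx
  have hadj : (ContinuousLinearMap.adjoint M) (z1 - z0) = 0 := by
    rw [map_sub, hz0init, hz1rel]; abel
  have hw : z1 - z0 = 0 := by
    have h1 := hMM (z1 - z0)
    rw [hadj, map_zero, inner_zero_right] at h1
    have h2 : ‖z1 - z0‖ ^ 2 ≤ 0 := by nlinarith
    have := sq_nonneg ‖z1 - z0‖
    have : ‖z1 - z0‖ = 0 := by nlinarith [sq_abs ‖z1 - z0‖]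
    exact norm_eq_zero.mp this
  have hz : z1 = z0 := by
    have := sub_eq_zero.mp hw; exact this
  refine ⟨hz, ?_⟩
  have h3 : β • (M x1 - y1) = 0 := by
    have : z0 - β • (M x1 - y1) = z0 := hz1 ▸ hz.symm ▸ rfl
    linear_combination (norm := abel) (z0 : EuclideanSpace ℝ (Fin m)) - this
  have h4 : M x1 - y1 = 0 := by
    rcases smul_eq_zero.mp h3 with h | h
    · exact absurd h (ne_of_gt hβ)
    · exact h
  rw [hy0]
  have := sub_eq_zero.mp h4
  exact this.symm
end
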